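/- arXiv:2604.22055 — 6 statements merged into one kernel-verified Lean document; each statement's English description precedes it below -/
import Mathlib

section
/- Under the uniform constraint assumptions, there exists τ > 0 such that every x ∈ ℝⁿ with dist(x, M) < τ admits a unique nearest point in M: there exists exactly one y ∈ M with ‖x − y‖ = dist(x, M). -/
set_option maxHeartbeats 2000000


open Metric MeasureTheory
open scoped RealInnerProductSpace

/-- **Uniform tubular neighborhood: unique nearest point.**
Under the uniform rank condition `⟨Dξ(q)Dξ(q)* w, w⟩ ≥ c‖w‖²` on `M` and the uniform
Hessian bound `‖D²ξᵢ(x)‖ ≤ C`, there is `τ > 0` such that every point `x` with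
`dist(x, M) < τ` has a unique nearest point in `M`. -/
theorem uniform_tube_unique_nearest_point
    (n m : ℕ) (hm : 1 ≤ m) (hnm : m ≤ n)
    (ξ : EuclideanSpace ℝ (Fin n) → EuclideanSpace ℝ (Fin m))
    (hξ : ContDiff ℝ (⊤ : ℕ∞) ξ)
    (M : Set (EuclideanSpace ℝ (Fin n)))
    (hM : M = {q | ξ q = 0})
    (hMne : M.Nonempty)
    (c : ℝ) (hc : 0 < c)
    (hrank : ∀ q ∈ M, ∀ w : EuclideanSpace ℝ (Fin m),
      c * ‖w‖ ^ 2 ≤ ⟪fderiv ℝ ξ q (ContinuousLinearMap.adjoint (fderiv ℝ ξ q) w), w⟫)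
    (C : ℝ) (hC : 0 < C)
    (hHess : ∀ x : EuclideanSpace ℝ (Fin n), ∀ i : Fin m,
      ‖iteratedFDeriv ℝ 2 (fun y => ξ y i) x‖ ≤ C) :
    ∃ τ > (0 : ℝ), ∀ x : EuclideanSpace ℝ (Fin n),
      Metric.infDist x M < τ →
      ∃! y, y ∈ M ∧ ‖x - y‖ = Metric.infDist x M := by
  classical
  set D : EuclideanSpace ℝ (Fin n) → (EuclideanSpace ℝ (Fin n) →L[ℝ] EuclideanSpace ℝ (Fin m)) :=
    fderiv ℝ ξ with hDdef
  set K : ℝ := Real.sqrt m * C with hKdef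
  have hm0 : (0:ℝ) < Real.sqrt m := Real.sqrt_pos.2 (by exact_mod_cast hm)
  have hK : 0 < K := mul_pos hm0 hC
  have hdiffξ : Differentiable ℝ ξ := hξ.differentiable (by simp)
  have hdiffD : Differentiable ℝ D := (hξ.fderiv_right (m := 1) (WithTop.coe_le_coe.2 le_top)).differentiable (by simp)
  -- bound on the full second derivative
  have hsecond : ∀ p : EuclideanSpace ℝ (Fin n), ‖fderiv ℝ D p‖ ≤ K := by
    intro p
    refine ContinuousLinearMap.opNorm_le_bound _ hK.le (fun u => ?_)
    refine ContinuousLinearMap.opNorm_le_bound _ (by positivity) (fun v => ?_)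
    have h2 : fderiv ℝ D p u v = iteratedFDeriv ℝ 2 ξ p ![u, v] := by
      rw [iteratedFDeriv_two_apply]
      simp [hDdef]
    have hcomp : ∀ i : Fin m, ‖iteratedFDeriv ℝ 2 ξ p ![u, v] i‖ ≤ C * (‖u‖ * ‖v‖) := by
      intro i
      have hci : iteratedFDeriv ℝ 2 (fun y => ξ y i) p
          = (EuclideanSpace.proj i).compContinuousMultilinearMap (iteratedFDeriv ℝ 2 ξ p) := by
        have h := (EuclideanSpace.proj (𝕜 := ℝ) i).iteratedFDeriv_comp_left (i := 2) (x := p) hξ.contDiffAt (WithTop.coe_le_coe.2 le_top)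
        exact h
      have h1 := (iteratedFDeriv ℝ 2 (fun y => ξ y i) p).le_opNorm ![u, v]
      have hval : iteratedFDeriv ℝ 2 (fun y => ξ y i) p ![u, v]
          = iteratedFDeriv ℝ 2 ξ p ![u, v] i := by
        rw [hci]; rfl
      rw [hval] at h1
      have hprod : (∏ j, ‖(![u, v] : Fin 2 → EuclideanSpace ℝ (Fin n)) j‖) = ‖u‖ * ‖v‖ := by
        simp [Fin.prod_univ_two]
      rw [hprod] at h1
      calc ‖iteratedFDeriv ℝ 2 ξ p ![u, v] i‖
          ≤ ‖iteratedFDeriv ℝ 2 (fun y => ξ y i) p‖ * (‖u‖ * ‖v‖) := h1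
        _ ≤ C * (‖u‖ * ‖v‖) := by
            have := hHess p i
            gcongr
    have hb : ‖iteratedFDeriv ℝ 2 ξ p ![u, v]‖ ≤ K * (‖u‖ * ‖v‖) := by
      rw [EuclideanSpace.norm_eq]
      have hsum : (∑ i : Fin m, ‖iteratedFDeriv ℝ 2 ξ p ![u, v] i‖ ^ 2)
          ≤ ∑ _i : Fin m, (C * (‖u‖ * ‖v‖)) ^ 2 := by
        refine Finset.sum_le_sum (fun i _ => ?_)
        exact pow_le_pow_left₀ (norm_nonneg _) (hcomp i) 2
      calc Real.sqrt (∑ i : Fin m, ‖iteratedFDeriv ℝ 2 ξ p ![u, v] i‖ ^ 2)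
          ≤ Real.sqrt (∑ _i : Fin m, (C * (‖u‖ * ‖v‖)) ^ 2) := Real.sqrt_le_sqrt hsum
        _ = K * (‖u‖ * ‖v‖) := by
            rw [Finset.sum_const, Finset.card_univ, Fintype.card_fin, nsmul_eq_mul,
              Real.sqrt_mul (by positivity), Real.sqrt_sq (by positivity), hKdef]
            ring
    calc ‖fderiv ℝ D p u v‖ = ‖iteratedFDeriv ℝ 2 ξ p ![u, v]‖ := by rw [h2]
      _ ≤ K * (‖u‖ * ‖v‖) := hb
      _ = K * ‖u‖ * ‖v‖ := by ring
  -- Taylor-type bound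
  have htaylor : ∀ y z : EuclideanSpace ℝ (Fin n), ‖ξ z - ξ y - D y (z - y)‖ ≤ K * ‖z - y‖ * ‖z - y‖ := by
    intro y z
    have hball : Convex ℝ (Metric.closedBall y ‖z - y‖) := convex_closedBall _ _
    have hLip : ∀ p ∈ Metric.closedBall y ‖z - y‖, ‖fderiv ℝ ξ p - D y‖ ≤ K * ‖z - y‖ := by
      intro p hp
      have h1 : ‖D p - D y‖ ≤ K * ‖p - y‖ :=
        convex_univ.norm_image_sub_le_of_norm_fderiv_le (fun q _ => hdiffD q)
          (fun q _ => hsecond q) (Set.mem_univ y) (Set.mem_univ p)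
      have h2 : ‖p - y‖ ≤ ‖z - y‖ := by
        simpa [dist_eq_norm] using hp
      calc ‖fderiv ℝ ξ p - D y‖ = ‖D p - D y‖ := rfl
        _ ≤ K * ‖p - y‖ := h1
        _ ≤ K * ‖z - y‖ := by gcongr
    have := hball.norm_image_sub_le_of_norm_fderiv_le' (f := ξ) (φ := D y) (x := y) (y := z)
      (fun p _ => hdiffξ p) hLip (Metric.mem_closedBall_self (norm_nonneg _))
      (by simp [Metric.mem_closedBall, dist_eq_norm])
    exact this
  -- closedness of M
  have hMc : IsClosed M := by
    rw [hM]
    exact isClosed_singleton.preimage hξ.continuous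
  refine ⟨Real.sqrt c / (2 * K), by positivity, ?_⟩
  intro x hx
  obtain ⟨y, hyM, hyd⟩ := hMc.exists_infDist_eq_dist hMne x
  have hd0 : 0 ≤ Metric.infDist x M := Metric.infDist_nonneg
  have hxy : ‖x - y‖ = Metric.infDist x M := by rw [hyd, dist_eq_norm]
  refine ⟨y, ⟨hyM, hxy⟩, ?_⟩
  rintro z ⟨hzM, hzx⟩
  have hξy : ξ y = 0 := by rw [hM] at hyM; exact hyM
  have hξz : ξ z = 0 := by rw [hM] at hzM; exact hzM
  set d := Metric.infDist x M with hddef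
  have hsc : (0:ℝ) < Real.sqrt c := Real.sqrt_pos.2 hc
  -- Lagrange multipliers at y
  have hf' : HasStrictFDerivAt ξ (D y) y := hξ.contDiffAt.hasStrictFDerivAt (by simp)
  have h1 : HasStrictFDerivAt (fun p : EuclideanSpace ℝ (Fin n) => x - p) (-(ContinuousLinearMap.id ℝ (EuclideanSpace ℝ (Fin n)))) y :=
    (hasStrictFDerivAt_id y).const_sub x
  have hφ := h1.inner ℝ h1
  have hextr : IsLocalExtrOn (fun p : EuclideanSpace ℝ (Fin n) => ⟪x - p, x - p⟫) {p | ξ p = ξ y} y := by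
    have hmin : IsMinOn (fun p : EuclideanSpace ℝ (Fin n) => ⟪x - p, x - p⟫) {p | ξ p = ξ y} y := by
      refine isMinOn_iff.2 (fun p hp => ?_)
      have hpM : p ∈ M := by rw [hM]; simpa [hξy] using hp
      have hle : ‖x - y‖ ≤ ‖x - p‖ := by
        rw [hxy, ← dist_eq_norm]
        exact Metric.infDist_le_dist_of_mem hpM
      simp only [real_inner_self_eq_norm_sq]
      exact pow_le_pow_left₀ (norm_nonneg _) hle 2
    exact hmin.localize.isExtr
  obtain ⟨Λ, Λ₀, hne, hΛ⟩ := hextr.exists_linear_map_of_hasStrictFDerivAt hf' hφ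
  have hΛD : ∀ v : EuclideanSpace ℝ (Fin n), Λ (D y v) = 2 * Λ₀ * ⟪x - y, v⟫ := by
    intro v
    have h := hΛ v
    have hφ'v : ((fderivInnerCLM ℝ ((fun p : EuclideanSpace ℝ (Fin n) => x - p) y, (fun p : EuclideanSpace ℝ (Fin n) => x - p) y)).comp
        ((-(ContinuousLinearMap.id ℝ (EuclideanSpace ℝ (Fin n)))).prod (-(ContinuousLinearMap.id ℝ (EuclideanSpace ℝ (Fin n)))))) v
        = -(2 * ⟪x - y, v⟫) := by
      simp only [ContinuousLinearMap.comp_apply, ContinuousLinearMap.prod_apply,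
        ContinuousLinearMap.neg_apply, ContinuousLinearMap.coe_id', id_eq,
        fderivInnerCLM_apply, inner_neg_left, inner_neg_right]
      rw [real_inner_comm v (x - y)]
      ring
    rw [hφ'v, smul_eq_mul] at h
    linarith
  -- representation of Λ by a vector
  set wv : EuclideanSpace ℝ (Fin m) := (WithLp.toLp 2 (fun i => Λ (EuclideanSpace.single i (1:ℝ))) : EuclideanSpace ℝ (Fin m)) with hwvdef
  have hrep : ∀ u : EuclideanSpace ℝ (Fin m), Λ u = ⟪wv, u⟫ := by
    have hext : Λ = ((innerSL ℝ wv : EuclideanSpace ℝ (Fin m) →L[ℝ] ℝ) :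
        EuclideanSpace ℝ (Fin m) →ₗ[ℝ] ℝ) := by
      apply Module.Basis.ext (EuclideanSpace.basisFun (Fin m) ℝ).toBasis
      intro i
      simp only [OrthonormalBasis.coe_toBasis, EuclideanSpace.basisFun_apply,
        ContinuousLinearMap.coe_coe, innerSL_apply_apply, EuclideanSpace.inner_single_right,
        conj_trivial, mul_one, one_mul, hwvdef, PiLp.toLp_apply]
    intro u
    rw [hext]
    rfl
  set A : EuclideanSpace ℝ (Fin n) →L[ℝ] EuclideanSpace ℝ (Fin m) := D y with hAdef
  have hadj : ∀ (u : EuclideanSpace ℝ (Fin m)) (v : EuclideanSpace ℝ (Fin n)), ⟪ContinuousLinearMap.adjoint A u, v⟫ = ⟪u, A v⟫ :=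
    fun u v => ContinuousLinearMap.adjoint_inner_left A v u
  -- Λ₀ ≠ 0
  have hΛ₀ : Λ₀ ≠ 0 := by
    intro h0
    have hzero : ∀ v : EuclideanSpace ℝ (Fin n), Λ (A v) = 0 := by
      intro v; rw [hΛD v, h0]; ring
    have h3 : ⟪ContinuousLinearMap.adjoint A wv, ContinuousLinearMap.adjoint A wv⟫ = 0 := by
      rw [hadj, ← hrep, hzero]
    have h4 := hrank y hyM wv
    have h5 : ⟪A (ContinuousLinearMap.adjoint A wv), wv⟫ = 0 := by
      rw [real_inner_comm, ← hadj]
      exact h3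
    rw [hAdef] at h5
    rw [h5] at h4
    have hwv0 : wv = 0 := by
      have : ‖wv‖ ^ 2 ≤ 0 := by nlinarith
      have : ‖wv‖ = 0 := by nlinarith [norm_nonneg wv, sq_nonneg ‖wv‖]
      exact norm_eq_zero.1 this
    apply hne
    have hΛ0 : Λ = 0 := by
      ext u
      rw [hrep, hwv0]
      simp
    rw [hΛ0, h0]
    rfl
  -- the normal vector
  set w : EuclideanSpace ℝ (Fin m) := (2 * Λ₀)⁻¹ • wv with hwdef
  have h2Λ₀ : (2 * Λ₀) ≠ 0 := mul_ne_zero two_ne_zero hΛ₀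
  have hAw : ContinuousLinearMap.adjoint A w = x - y := by
    have h1' : ContinuousLinearMap.adjoint A wv = (2 * Λ₀) • (x - y) := by
      refine ext_inner_right ℝ (fun v => ?_)
      rw [hadj, ← hrep, hΛD, real_inner_smul_left]
    rw [hwdef, _root_.map_smul, h1', smul_smul, inv_mul_cancel₀ h2Λ₀, one_smul]
  -- bound on ‖w‖
  have hwnorm : Real.sqrt c * ‖w‖ ≤ d := by
    have hr := hrank y hyM w
    have heq : ⟪A (ContinuousLinearMap.adjoint A w), w⟫
        = ‖ContinuousLinearMap.adjoint A w‖ ^ 2 := by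
      rw [real_inner_comm, ← hadj, real_inner_self_eq_norm_sq]
    rw [hAdef] at heq
    rw [heq, hAw, hxy] at hr
    have h6 : Real.sqrt (c * ‖w‖ ^ 2) ≤ Real.sqrt (d ^ 2) := Real.sqrt_le_sqrt hr
    rwa [Real.sqrt_mul hc.le, Real.sqrt_sq (norm_nonneg w), Real.sqrt_sq hd0] at h6
  -- key identity
  have hk : ‖z - y‖ ^ 2 = 2 * ⟪x - y, z - y⟫ := by
    have e1 : ‖(x - y) - (z - y)‖ ^ 2
        = ‖x - y‖ ^ 2 - 2 * ⟪x - y, z - y⟫ + ‖z - y‖ ^ 2 := norm_sub_sq_real _ _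
    have e2 : (x - y) - (z - y) = x - z := by abel
    rw [e2, hzx, hxy] at e1
    linarith
  -- bound on the inner product
  have hAz : ‖A (z - y)‖ ≤ K * ‖z - y‖ * ‖z - y‖ := by
    have := htaylor y z
    rw [hξy, hξz] at this
    simpa only [sub_zero, zero_sub, norm_neg] using this
  have hzb : ⟪x - y, z - y⟫ ≤ ‖w‖ * (K * ‖z - y‖ * ‖z - y‖) := by
    rw [← hAw, hadj]
    calc ⟪w, A (z - y)⟫ ≤ ‖w‖ * ‖A (z - y)‖ := real_inner_le_norm _ _
      _ ≤ ‖w‖ * (K * ‖z - y‖ * ‖z - y‖) := by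
          gcongr
  -- conclusion
  by_contra hne'
  have hzy0 : 0 < ‖z - y‖ := norm_pos_iff.2 (sub_ne_zero_of_ne hne')
  have hwn : 0 ≤ ‖w‖ := norm_nonneg w
  have hdτ : d < Real.sqrt c / (2 * K) := hx
  have hsq : ‖z - y‖ * ‖z - y‖ = ‖z - y‖ ^ 2 := (sq ‖z - y‖).symm
  have h5 : ‖z - y‖ ^ 2 ≤ 2 * ‖w‖ * K * ‖z - y‖ ^ 2 := by nlinarith [hk, hzb, hsq]
  have h6 : 1 ≤ 2 * ‖w‖ * K := by nlinarith [mul_pos hzy0 hzy0, h5, hsq]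
  have hA2 : Real.sqrt c * 1 ≤ Real.sqrt c * (2 * ‖w‖ * K) :=
    mul_le_mul_of_nonneg_left h6 hsc.le
  have hA1 : 2 * K * (Real.sqrt c * ‖w‖) ≤ 2 * K * d :=
    mul_le_mul_of_nonneg_left hwnorm (by positivity)
  have hA3 : 2 * K * d < Real.sqrt c := by
    have h7 := (mul_lt_mul_iff_right₀ (show (0:ℝ) < 2 * K by positivity)).2 hdτ
    calc 2 * K * d < 2 * K * (Real.sqrt c / (2 * K)) := h7
      _ = Real.sqrt c := by field_simp
  nlinarith [hA2, hA1, hA3]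
end

section
/- Under the uniform constraint assumptions, there exists τ > 0 such that the normal-bundle parametrization F(q, v) := q + Dξ(q)* v is injective on the set {(q, v) ∈ ℝⁿ × ℝᵐ : ξ(q) = 0 and ‖Dξ(q)* v‖ < τ}; that is, if ξ(q₁) = ξ(q₂) = 0, ‖Dξ(q₁)* v₁‖ < τ, ‖Dξ(q₂)* v₂‖ < τ and q₁ + Dξ(q₁)* v₁ = q₂ + Dξ(q₂)* v₂, then q₁ = q₂ and v₁ = v₂. -/
open Metric MeasureTheory
open scoped RealInnerProductSpace

/-- Quadratic Taylor remainder bound from a uniform second-derivative bound. -/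
lemma quad_remainder_aux {E F : Type*} [NormedAddCommGroup E] [NormedSpace ℝ E]
    [NormedAddCommGroup F] [NormedSpace ℝ F]
    (f : E → F) (hf : ContDiff ℝ (⊤ : ℕ∞) f) (C : ℝ)
    (hC : ∀ x, ‖iteratedFDeriv ℝ 2 f x‖ ≤ C) (a b : E) :
    ‖f b - f a - fderiv ℝ f a (b - a)‖ ≤ C * ‖b - a‖ ^ 2 := by
  have hC0 : 0 ≤ C := le_trans (norm_nonneg _) (hC a)
  have hdf : Differentiable ℝ f := hf.differentiable (by simp)
  have hdg : Differentiable ℝ (fderiv ℝ f) :=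
    (hf.fderiv_right (m := (⊤ : ℕ∞)) (by simp)).differentiable (by simp)
  have hC2 : ∀ x, ‖fderiv ℝ (fderiv ℝ f) x‖ ≤ C := by
    intro x
    have h1 : ‖fderiv ℝ (fderiv ℝ f) x‖
        = ‖iteratedFDeriv ℝ 0 (fderiv ℝ (fderiv ℝ f)) x‖ := by
      rw [norm_iteratedFDeriv_zero]
    rw [h1, norm_iteratedFDeriv_fderiv, norm_iteratedFDeriv_fderiv]
    exact hC x
  have hlip : ∀ x : E, ‖fderiv ℝ f x - fderiv ℝ f a‖ ≤ C * ‖x - a‖ := by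
    intro x
    exact (convex_univ).norm_image_sub_le_of_norm_fderiv_le
      (fun y _ => hdg y) (fun y _ => hC2 y) (Set.mem_univ a) (Set.mem_univ x)
  have hb : b ∈ closedBall a ‖b - a‖ := by simp [mem_closedBall, dist_eq_norm]
  have key := (convex_closedBall a ‖b - a‖).norm_image_sub_le_of_norm_fderiv_le'
    (f := f) (φ := fderiv ℝ f a) (C := C * ‖b - a‖)
    (fun y _ => hdf y)
    (fun y hy => by
      calc ‖fderiv ℝ f y - fderiv ℝ f a‖ ≤ C * ‖y - a‖ := hlip y
        _ ≤ C * ‖b - a‖ := by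
            have : ‖y - a‖ ≤ ‖b - a‖ := by
              simpa [dist_eq_norm] using hy
            exact mul_le_mul_of_nonneg_left this hC0)
    (mem_closedBall_self (norm_nonneg _))
    hb
  calc ‖f b - f a - fderiv ℝ f a (b - a)‖ ≤ (C * ‖b - a‖) * ‖b - a‖ := key
    _ = C * ‖b - a‖ ^ 2 := by ring

set_option maxHeartbeats 1000000 in
/-- **Injectivity of the normal-bundle parametrization on a uniform tube.**
Under the uniform rank condition and the uniform Hessian bound, there is `τ > 0`
such that `F(q,v) = q + Dξ(q)* v` is injective on
`{(q,v) : ξ(q) = 0, ‖Dξ(q)* v‖ < τ}`. -/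
theorem normal_bundle_parametrization_injective
    (n m : ℕ) (hm : 1 ≤ m) (hnm : m ≤ n)
    (ξ : EuclideanSpace ℝ (Fin n) → EuclideanSpace ℝ (Fin m))
    (hξ : ContDiff ℝ (⊤ : ℕ∞) ξ)
    (M : Set (EuclideanSpace ℝ (Fin n)))
    (hM : M = {q | ξ q = 0})
    (hMne : M.Nonempty)
    (c : ℝ) (hc : 0 < c)
    (hrank : ∀ q ∈ M, ∀ w : EuclideanSpace ℝ (Fin m),
      c * ‖w‖ ^ 2 ≤ ⟪fderiv ℝ ξ q (ContinuousLinearMap.adjoint (fderiv ℝ ξ q) w), w⟫)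
    (C : ℝ) (hC : 0 < C)
    (hHess : ∀ x : EuclideanSpace ℝ (Fin n), ∀ i : Fin m,
      ‖iteratedFDeriv ℝ 2 (fun y => ξ y i) x‖ ≤ C) :
    ∃ τ > (0 : ℝ), ∀ q₁ q₂ : EuclideanSpace ℝ (Fin n),
      ∀ v₁ v₂ : EuclideanSpace ℝ (Fin m),
      ξ q₁ = 0 → ξ q₂ = 0 →
      ‖ContinuousLinearMap.adjoint (fderiv ℝ ξ q₁) v₁‖ < τ →
      ‖ContinuousLinearMap.adjoint (fderiv ℝ ξ q₂) v₂‖ < τ →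
      q₁ + ContinuousLinearMap.adjoint (fderiv ℝ ξ q₁) v₁
        = q₂ + ContinuousLinearMap.adjoint (fderiv ℝ ξ q₂) v₂ →
      q₁ = q₂ ∧ v₁ = v₂ := by
  classical
  have hdiff : Differentiable ℝ ξ := hξ.differentiable (by simp)
  -- component functions
  have hgi : ∀ i : Fin m, ContDiff ℝ (⊤ : ℕ∞) (fun y => ξ y i) := fun i =>
    (EuclideanSpace.proj i : EuclideanSpace ℝ (Fin m) →L[ℝ] ℝ).contDiff.comp hξ
  have hfd : ∀ (q : EuclideanSpace ℝ (Fin n)) (i : Fin m),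
      fderiv ℝ (fun y => ξ y i) q
        = (EuclideanSpace.proj i : EuclideanSpace ℝ (Fin m) →L[ℝ] ℝ).comp (fderiv ℝ ξ q) := by
    intro q i
    exact ((EuclideanSpace.proj i :
      EuclideanSpace ℝ (Fin m) →L[ℝ] ℝ).hasFDerivAt.comp q (hdiff q).hasFDerivAt).fderiv
  -- tangency estimate
  have htangent : ∀ a b : EuclideanSpace ℝ (Fin n), ξ a = 0 → ξ b = 0 →
      ‖fderiv ℝ ξ a (b - a)‖ ≤ (Real.sqrt m * C) * ‖b - a‖ ^ 2 := by
    intro a b ha hb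
    have hB0 : (0 : ℝ) ≤ C * ‖b - a‖ ^ 2 := by positivity
    have hcomp : ∀ i : Fin m, ‖(fderiv ℝ ξ a (b - a)) i‖ ≤ C * ‖b - a‖ ^ 2 := by
      intro i
      have h := quad_remainder_aux (fun y => ξ y i) (hgi i) C (fun x => hHess x i) a b
      have hai : ξ a i = 0 := by rw [ha]; rfl
      have hbi : ξ b i = 0 := by rw [hb]; rfl
      rw [hfd a i] at h
      simpa [hai, hbi, abs_sub_comm] using h
    have hsum : (∑ i : Fin m, ‖(fderiv ℝ ξ a (b - a)) i‖ ^ 2)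
        ≤ (m : ℝ) * (C * ‖b - a‖ ^ 2) ^ 2 := by
      calc (∑ i : Fin m, ‖(fderiv ℝ ξ a (b - a)) i‖ ^ 2)
          ≤ ∑ _i : Fin m, (C * ‖b - a‖ ^ 2) ^ 2 :=
            Finset.sum_le_sum (fun i _ => pow_le_pow_left₀ (norm_nonneg _) (hcomp i) 2)
        _ = (m : ℝ) * (C * ‖b - a‖ ^ 2) ^ 2 := by
            simp [Finset.sum_const, Finset.card_univ, mul_comm]
    calc ‖fderiv ℝ ξ a (b - a)‖
        = Real.sqrt (∑ i : Fin m, ‖(fderiv ℝ ξ a (b - a)) i‖ ^ 2) := by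
          rw [EuclideanSpace.norm_eq]
      _ ≤ Real.sqrt ((m : ℝ) * (C * ‖b - a‖ ^ 2) ^ 2) := Real.sqrt_le_sqrt hsum
      _ = Real.sqrt m * (C * ‖b - a‖ ^ 2) := by
          rw [Real.sqrt_mul (Nat.cast_nonneg m), Real.sqrt_sq hB0]
      _ = (Real.sqrt m * C) * ‖b - a‖ ^ 2 := by ring
  -- constants
  set K : ℝ := Real.sqrt m * C with hKdef
  have hK : 0 < K := by
    have hm0 : (0 : ℝ) < (m : ℝ) := by exact_mod_cast hm
    exact mul_pos (Real.sqrt_pos.mpr hm0) hC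
  have hsc : 0 < Real.sqrt c := Real.sqrt_pos.mpr hc
  refine ⟨Real.sqrt c / (4 * K), by positivity, ?_⟩
  set τ : ℝ := Real.sqrt c / (4 * K) with hτdef
  have hτ : 0 < τ := by positivity
  -- rank condition gives a norm bound on v
  have hAAd : ∀ (q : EuclideanSpace ℝ (Fin n)) (w : EuclideanSpace ℝ (Fin m)), ξ q = 0 →
      c * ‖w‖ ^ 2 ≤ ‖ContinuousLinearMap.adjoint (fderiv ℝ ξ q) w‖ ^ 2 := by
    intro q w hq
    have hqM : q ∈ M := by rw [hM]; exact hq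
    have h1 := hrank q hqM w
    have h2 : ⟪fderiv ℝ ξ q (ContinuousLinearMap.adjoint (fderiv ℝ ξ q) w), w⟫
        = ‖ContinuousLinearMap.adjoint (fderiv ℝ ξ q) w‖ ^ 2 := by
      rw [real_inner_comm, ← ContinuousLinearMap.adjoint_inner_left (fderiv ℝ ξ q),
        real_inner_self_eq_norm_sq]
    rw [h2] at h1
    exact h1
  have hvb : ∀ (q : EuclideanSpace ℝ (Fin n)) (v : EuclideanSpace ℝ (Fin m)), ξ q = 0 →
      ‖ContinuousLinearMap.adjoint (fderiv ℝ ξ q) v‖ < τ → ‖v‖ ≤ τ / Real.sqrt c := by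
    intro q v hq hlt
    have h1 := hAAd q v hq
    have h2 : c * ‖v‖ ^ 2 ≤ τ ^ 2 := by
      refine h1.trans ?_
      have := norm_nonneg (ContinuousLinearMap.adjoint (fderiv ℝ ξ q) v)
      nlinarith
    have h3 : ‖v‖ ^ 2 ≤ (τ / Real.sqrt c) ^ 2 := by
      rw [div_pow, Real.sq_sqrt hc.le]
      rw [le_div_iff₀ hc]
      nlinarith
    have h4 : (0 : ℝ) ≤ τ / Real.sqrt c := by positivity
    nlinarith [norm_nonneg v]
  intro q₁ q₂ v₁ v₂ h1 h2 ht1 ht2 heq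
  set A₁ := fderiv ℝ ξ q₁ with hA₁
  set A₂ := fderiv ℝ ξ q₂ with hA₂
  set N₁ := ContinuousLinearMap.adjoint A₁ v₁ with hN₁
  set N₂ := ContinuousLinearMap.adjoint A₂ v₂ with hN₂
  have hd : q₂ - q₁ = N₁ - N₂ :=
    sub_eq_sub_iff_add_eq_add.mpr (by rw [← heq, add_comm])
  set d := q₂ - q₁ with hddef
  -- the key inequality
  have hsq : ‖d‖ ^ 2 = ⟪v₁, A₁ d⟫ - ⟪v₂, A₂ d⟫ := by
    calc ‖d‖ ^ 2 = ⟪d, d⟫ := (real_inner_self_eq_norm_sq d).symm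
      _ = ⟪N₁ - N₂, d⟫ := by rw [← hd]
      _ = ⟪N₁, d⟫ - ⟪N₂, d⟫ := inner_sub_left _ _ _
      _ = ⟪v₁, A₁ d⟫ - ⟪v₂, A₂ d⟫ := by
          rw [hN₁, hN₂, ContinuousLinearMap.adjoint_inner_left,
            ContinuousLinearMap.adjoint_inner_left]
  have hb1 : ‖A₁ d‖ ≤ K * ‖d‖ ^ 2 := htangent q₁ q₂ h1 h2
  have hb2 : ‖A₂ d‖ ≤ K * ‖d‖ ^ 2 := by
    have h := htangent q₂ q₁ h2 h1
    have hrev : ‖A₂ (q₁ - q₂)‖ = ‖A₂ d‖ := by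
      have hne : q₁ - q₂ = -d := by rw [hddef]; abel
      rw [hne, map_neg, norm_neg]
    have hnrev : ‖q₁ - q₂‖ = ‖d‖ := by rw [hddef, norm_sub_rev]
    rw [hrev, hnrev] at h
    exact h
  have hv1 : ‖v₁‖ ≤ τ / Real.sqrt c := hvb q₁ v₁ h1 ht1
  have hv2 : ‖v₂‖ ≤ τ / Real.sqrt c := hvb q₂ v₂ h2 ht2
  have hi1 : ⟪v₁, A₁ d⟫ ≤ ‖v₁‖ * (K * ‖d‖ ^ 2) :=
    (real_inner_le_norm v₁ (A₁ d)).trans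
      (mul_le_mul_of_nonneg_left hb1 (norm_nonneg v₁))
  have hi2 : -⟪v₂, A₂ d⟫ ≤ ‖v₂‖ * (K * ‖d‖ ^ 2) := by
    have : -⟪v₂, A₂ d⟫ ≤ ‖v₂‖ * ‖A₂ d‖ := by
      have := real_inner_le_norm v₂ (-(A₂ d))
      simpa [inner_neg_right] using this
    exact this.trans (mul_le_mul_of_nonneg_left hb2 (norm_nonneg v₂))
  have hmain : ‖d‖ ^ 2 ≤ (2 * (τ / Real.sqrt c)) * (K * ‖d‖ ^ 2) := by
    have hK2 : 0 ≤ K * ‖d‖ ^ 2 := by positivity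
    calc ‖d‖ ^ 2 = ⟪v₁, A₁ d⟫ - ⟪v₂, A₂ d⟫ := hsq
      _ ≤ ‖v₁‖ * (K * ‖d‖ ^ 2) + ‖v₂‖ * (K * ‖d‖ ^ 2) := by linarith
      _ ≤ (τ / Real.sqrt c) * (K * ‖d‖ ^ 2) + (τ / Real.sqrt c) * (K * ‖d‖ ^ 2) := by
          gcongr
      _ = (2 * (τ / Real.sqrt c)) * (K * ‖d‖ ^ 2) := by ring
  have hhalf : (2 * (τ / Real.sqrt c)) * K = 1 / 2 := by
    rw [hτdef]
    field_simp
    ring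
  have hd2 : ‖d‖ ^ 2 ≤ 1 / 2 * ‖d‖ ^ 2 := by
    calc ‖d‖ ^ 2 ≤ (2 * (τ / Real.sqrt c)) * (K * ‖d‖ ^ 2) := hmain
      _ = ((2 * (τ / Real.sqrt c)) * K) * ‖d‖ ^ 2 := by ring
      _ = 1 / 2 * ‖d‖ ^ 2 := by rw [hhalf]
  have hd0 : d = 0 := by
    have : ‖d‖ ^ 2 ≤ 0 := by linarith
    have h0 : ‖d‖ = 0 := by nlinarith [norm_nonneg d, sq_nonneg ‖d‖]
    exact norm_eq_zero.mp h0
  have hq12 : q₁ = q₂ := by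
    have : q₂ - q₁ = 0 := hd0
    have := sub_eq_zero.mp this
    exact this.symm
  refine ⟨hq12, ?_⟩
  -- now v₁ = v₂
  subst hq12
  have hN : N₁ = N₂ := by
    have := heq
    exact add_left_cancel this
  have hzero : ContinuousLinearMap.adjoint A₁ (v₁ - v₂) = 0 := by
    rw [map_sub]
    rw [hN₁, hN₂] at hN
    rw [hN]
    rw [hA₁, hA₂, sub_self]
  have hfin := hAAd q₁ (v₁ - v₂) h1
  rw [hA₁] at hzero
  rw [hzero] at hfin
  have hfin' : c * ‖v₁ - v₂‖ ^ 2 ≤ 0 := by simpa using hfin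
  have hle : ‖v₁ - v₂‖ ^ 2 ≤ 0 := by
    by_contra hpos
    push_neg at hpos
    exact absurd hfin' (not_le.mpr (mul_pos hc hpos))
  have hsqz : ‖v₁ - v₂‖ ^ 2 = 0 := le_antisymm hle (sq_nonneg _)
  have hnz : ‖v₁ - v₂‖ = 0 := by
    exact pow_eq_zero_iff (two_ne_zero) |>.mp hsqz
  exact sub_eq_zero.mp (norm_eq_zero.mp hnz)
end

section
/- Under the uniform constraint assumptions, there exists τ > 0 such that every x ∈ ℝⁿ with dist(x, M) < τ admits a unique normal-bundle decomposition: there exist unique q ∈ ℝⁿ and v ∈ ℝᵐ with ξ(q) = 0, x = q + Dξ(q)* v, and ‖Dξ(q)* v‖ < τ; moreover, for this decomposition q is the nearest point of M to x, i.e. ‖x − q‖ = dist(x, M). -/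
open Metric MeasureTheory
open scoped RealInnerProductSpace

lemma nbd_lip (n m : ℕ)
    (ξ : EuclideanSpace ℝ (Fin n) → EuclideanSpace ℝ (Fin m))
    (hξ : ContDiff ℝ (⊤ : ℕ∞) ξ)
    (C : ℝ) (hC : 0 < C)
    (hHess : ∀ x : EuclideanSpace ℝ (Fin n), ∀ i : Fin m,
      ‖iteratedFDeriv ℝ 2 (fun y => ξ y i) x‖ ≤ C) :
    ∀ a b, ‖fderiv ℝ ξ b - fderiv ℝ ξ a‖ ≤ (Real.sqrt m * C) * ‖b - a‖ := by
  set L : ℝ := Real.sqrt m * C with hL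
  have hL0 : 0 ≤ L := mul_nonneg (Real.sqrt_nonneg _) hC.le
  -- pointwise bound on second derivative
  have h2 : ∀ x (u : Fin 2 → EuclideanSpace ℝ (Fin n)),
      ‖iteratedFDeriv ℝ 2 ξ x u‖ ≤ L * (‖u 0‖ * ‖u 1‖) := by
    intro x u
    have hcomp : ∀ i : Fin m,
        iteratedFDeriv ℝ 2 ξ x u i = iteratedFDeriv ℝ 2 (fun y => ξ y i) x u := by
      intro i
      have := (EuclideanSpace.proj (𝕜 := ℝ) i).iteratedFDeriv_comp_left (hξ.contDiffAt (x := x))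
        (i := 2) (WithTop.coe_le_coe.mpr le_top)
      have h2' := congrFun (congrArg DFunLike.coe this) u
      simpa [Function.comp_def] using h2'.symm
    have hcomp_bound : ∀ i : Fin m,
        |iteratedFDeriv ℝ 2 ξ x u i| ≤ C * (‖u 0‖ * ‖u 1‖) := by
      intro i
      rw [hcomp i]
      calc |iteratedFDeriv ℝ 2 (fun y => ξ y i) x u|
          ≤ ‖iteratedFDeriv ℝ 2 (fun y => ξ y i) x‖ * ∏ j, ‖u j‖ :=
            (iteratedFDeriv ℝ 2 (fun y => ξ y i) x).le_opNorm u
        _ ≤ C * (‖u 0‖ * ‖u 1‖) := by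
            rw [Fin.prod_univ_two]
            exact mul_le_mul_of_nonneg_right (hHess x i)
              (mul_nonneg (norm_nonneg _) (norm_nonneg _))
    rw [EuclideanSpace.norm_eq]
    have : Real.sqrt (∑ i, ‖iteratedFDeriv ℝ 2 ξ x u i‖ ^ 2)
        ≤ Real.sqrt (∑ _i : Fin m, (C * (‖u 0‖ * ‖u 1‖)) ^ 2) := by
      apply Real.sqrt_le_sqrt
      apply Finset.sum_le_sum
      intro i _
      have := hcomp_bound i
      rw [Real.norm_eq_abs]
      exact pow_le_pow_left₀ (abs_nonneg _) this 2
    refine this.trans ?_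
    rw [Finset.sum_const, Finset.card_univ, Fintype.card_fin, nsmul_eq_mul]
    rw [Real.sqrt_mul (Nat.cast_nonneg m), Real.sqrt_sq
      (mul_nonneg hC.le (mul_nonneg (norm_nonneg _) (norm_nonneg _)))]
    rw [hL]
    ring_nf
    exact le_refl _
  -- bound on fderiv of fderiv
  have hdd : ∀ x, ‖fderiv ℝ (fderiv ℝ ξ) x‖ ≤ L := by
    intro x
    refine ContinuousLinearMap.opNorm_le_bound _ hL0 (fun u => ?_)
    refine ContinuousLinearMap.opNorm_le_bound _ (mul_nonneg hL0 (norm_nonneg _)) (fun v => ?_)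
    have := h2 x ![u, v]
    rw [iteratedFDeriv_two_apply] at this
    simpa [mul_assoc] using this
  have hd2 : Differentiable ℝ (fderiv ℝ ξ) := by
    have : ContDiff ℝ (⊤ : ℕ∞) (fderiv ℝ ξ) := hξ.fderiv_right (by simp)
    exact this.differentiable (by simp)
  intro a b
  have := convex_univ.norm_image_sub_le_of_norm_fderiv_le
    (fun x _ => hd2.differentiableAt) (fun x _ => hdd x) (Set.mem_univ a) (Set.mem_univ b)
  simpa using this

lemma nbd_taylor {n m : ℕ}
    {ξ : EuclideanSpace ℝ (Fin n) → EuclideanSpace ℝ (Fin m)}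
    (hξ : ContDiff ℝ (⊤ : ℕ∞) ξ) {L : ℝ} (hL0 : 0 ≤ L)
    (hlip : ∀ a b, ‖fderiv ℝ ξ b - fderiv ℝ ξ a‖ ≤ L * ‖b - a‖) :
    ∀ a b, ‖ξ b - ξ a - fderiv ℝ ξ a (b - a)‖ ≤ L * ‖b - a‖ * ‖b - a‖ := by
  intro a b
  have hs : Convex ℝ (closedBall a ‖b - a‖) := convex_closedBall _ _
  have hmem_b : b ∈ closedBall a ‖b - a‖ := by
    simp [mem_closedBall, dist_eq_norm]
  have hmem_a : a ∈ closedBall a ‖b - a‖ := mem_closedBall_self (norm_nonneg _)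
  have := hs.norm_image_sub_le_of_norm_fderiv_le'
    (fun x _ => (hξ.differentiable (by simp)).differentiableAt)
    (fun x hx => by
      have h1 := hlip a x
      have : ‖x - a‖ ≤ ‖b - a‖ := by simpa [dist_eq_norm] using hx
      calc ‖fderiv ℝ ξ x - fderiv ℝ ξ a‖ ≤ L * ‖x - a‖ := h1
        _ ≤ L * ‖b - a‖ := mul_le_mul_of_nonneg_left this hL0)
    hmem_a hmem_b
  linarith [this]

lemma nbd_lower {n m : ℕ}
    {ξ : EuclideanSpace ℝ (Fin n) → EuclideanSpace ℝ (Fin m)}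
    {M : Set (EuclideanSpace ℝ (Fin n))}
    {c : ℝ} (hc : 0 < c)
    (hrank : ∀ q ∈ M, ∀ w : EuclideanSpace ℝ (Fin m),
      c * ‖w‖ ^ 2 ≤ ⟪fderiv ℝ ξ q (ContinuousLinearMap.adjoint (fderiv ℝ ξ q) w), w⟫)
    {q : EuclideanSpace ℝ (Fin n)} (hq : q ∈ M) (w : EuclideanSpace ℝ (Fin m)) :
    Real.sqrt c * ‖w‖ ≤ ‖ContinuousLinearMap.adjoint (fderiv ℝ ξ q) w‖ := by
  set A := ContinuousLinearMap.adjoint (fderiv ℝ ξ q)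
  have key : ⟪fderiv ℝ ξ q (A w), w⟫ = ‖A w‖ ^ 2 := by
    rw [← ContinuousLinearMap.adjoint_inner_right (fderiv ℝ ξ q) (A w) w]
    exact real_inner_self_eq_norm_sq _
  have h1 : c * ‖w‖ ^ 2 ≤ ‖A w‖ ^ 2 := by
    have := hrank q hq w; rw [key] at this; exact this
  have := Real.sqrt_le_sqrt h1
  rwa [Real.sqrt_mul hc.le, Real.sqrt_sq (norm_nonneg _), Real.sqrt_sq (norm_nonneg _)] at this

lemma nbd_surj {n m : ℕ}
    {ξ : EuclideanSpace ℝ (Fin n) → EuclideanSpace ℝ (Fin m)}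
    {M : Set (EuclideanSpace ℝ (Fin n))}
    {c : ℝ} (hc : 0 < c)
    (hrank : ∀ q ∈ M, ∀ w : EuclideanSpace ℝ (Fin m),
      c * ‖w‖ ^ 2 ≤ ⟪fderiv ℝ ξ q (ContinuousLinearMap.adjoint (fderiv ℝ ξ q) w), w⟫)
    {q : EuclideanSpace ℝ (Fin n)} (hq : q ∈ M) :
    ∀ w : EuclideanSpace ℝ (Fin m), ∃ z,
      fderiv ℝ ξ q (ContinuousLinearMap.adjoint (fderiv ℝ ξ q) z) = w := by
  set T : EuclideanSpace ℝ (Fin m) →ₗ[ℝ] EuclideanSpace ℝ (Fin m) :=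
    ((fderiv ℝ ξ q).comp (ContinuousLinearMap.adjoint (fderiv ℝ ξ q))).toLinearMap
  have hinj : Function.Injective T := by
    rw [← LinearMap.ker_eq_bot, LinearMap.ker_eq_bot']
    intro w hw
    have := hrank q hq w
    have hw' : ⟪fderiv ℝ ξ q (ContinuousLinearMap.adjoint (fderiv ℝ ξ q) w), w⟫ = 0 := by
      have : T w = 0 := hw
      simp only [T, ContinuousLinearMap.coe_coe, ContinuousLinearMap.comp_apply] at this
      rw [this, inner_zero_left]
    rw [hw'] at this
    have : ‖w‖ ^ 2 ≤ 0 := by nlinarith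
    have : ‖w‖ = 0 := by nlinarith [norm_nonneg w, sq_nonneg ‖w‖]
    exact norm_eq_zero.mp this
  have hsurj : Function.Surjective T := LinearMap.injective_iff_surjective.mp hinj
  intro w
  obtain ⟨z, hz⟩ := hsurj w
  exact ⟨z, hz⟩

lemma nbd_exist {n m : ℕ}
    {ξ : EuclideanSpace ℝ (Fin n) → EuclideanSpace ℝ (Fin m)}
    (hξ : ContDiff ℝ (⊤ : ℕ∞) ξ)
    {M : Set (EuclideanSpace ℝ (Fin n))}
    (hM : M = {q | ξ q = 0})
    {x q : EuclideanSpace ℝ (Fin n)} (hq : q ∈ M)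
    (hsurjKA : ∀ w, ∃ z, fderiv ℝ ξ q (ContinuousLinearMap.adjoint (fderiv ℝ ξ q) z) = w)
    (hmin : ∀ y ∈ M, ‖q - x‖ ≤ ‖y - x‖) :
    ∃ v, ContinuousLinearMap.adjoint (fderiv ℝ ξ q) v = x - q := by
  classical
  set φ : EuclideanSpace ℝ (Fin n) → ℝ := fun y => ⟪y - x, y - x⟫ with hφdef
  have hf' : HasStrictFDerivAt ξ (fderiv ℝ ξ q) q :=
    hξ.contDiffAt.hasStrictFDerivAt (by simp)
  have hsub : HasStrictFDerivAt (fun y : EuclideanSpace ℝ (Fin n) => y - x)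
      (ContinuousLinearMap.id ℝ _) q := (hasStrictFDerivAt_id q).sub_const x
  have hφ' : HasStrictFDerivAt φ
      ((fderivInnerCLM ℝ (q - x, q - x)).comp
        ((ContinuousLinearMap.id ℝ _).prod (ContinuousLinearMap.id ℝ _))) q :=
    HasStrictFDerivAt.inner ℝ hsub hsub
  have hq0 : ξ q = 0 := by rw [hM] at hq; exact hq
  have hextr : IsLocalExtrOn φ {y | ξ y = ξ q} q := by
    have hset : {y | ξ y = ξ q} = M := by rw [hM, hq0]
    rw [IsLocalExtrOn, hset]
    left
    have hminF : IsMinOn φ M q := by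
      intro y hy
      simp only [φ, Set.mem_setOf_eq]
      rw [real_inner_self_eq_norm_sq, real_inner_self_eq_norm_sq]
      have := hmin y hy
      nlinarith [norm_nonneg (q - x), norm_nonneg (y - x)]
    rw [nhdsWithin]
    exact hminF.filter_mono inf_le_right
  obtain ⟨Λ, Λ₀, hΛne, hall⟩ := hextr.exists_linear_map_of_hasStrictFDerivAt hf' hφ'
  -- Λ₀ ≠ 0
  have hΛ₀ : Λ₀ ≠ 0 := by
    intro h0
    apply hΛne
    have hΛ0 : Λ = 0 := by
      apply LinearMap.ext
      intro w
      obtain ⟨z, hz⟩ := hsurjKA w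
      have := hall (ContinuousLinearMap.adjoint (fderiv ℝ ξ q) z)
      rw [h0, hz] at this
      simpa using this
    rw [hΛ0, h0]
    rfl
  set w₀ := (InnerProductSpace.toDual ℝ (EuclideanSpace ℝ (Fin m))).symm
    (LinearMap.toContinuousLinearMap Λ) with hw₀
  have hΛw : ∀ u, Λ (fderiv ℝ ξ q u)
      = ⟪ContinuousLinearMap.adjoint (fderiv ℝ ξ q) w₀, u⟫ := by
    intro u
    rw [ContinuousLinearMap.adjoint_inner_left, hw₀, InnerProductSpace.toDual_symm_apply]
    simp
  have hkey : ∀ u : EuclideanSpace ℝ (Fin n),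
      ⟪ContinuousLinearMap.adjoint (fderiv ℝ ξ q) w₀ + (2 * Λ₀) • (q - x), u⟫ = 0 := by
    intro u
    have h1 := hall u
    rw [hΛw u] at h1
    have hφ'u : ((fderivInnerCLM ℝ (q - x, q - x)).comp
        ((ContinuousLinearMap.id ℝ _).prod (ContinuousLinearMap.id ℝ _))) u
        = 2 * ⟪q - x, u⟫ := by
      simp only [ContinuousLinearMap.comp_apply, ContinuousLinearMap.prod_apply,
        ContinuousLinearMap.id_apply, fderivInnerCLM_apply]
      rw [real_inner_comm u (q - x)]
      ring
    rw [hφ'u] at h1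
    rw [inner_add_left, real_inner_smul_left]
    rw [smul_eq_mul] at h1
    linear_combination h1
  have hAw : ContinuousLinearMap.adjoint (fderiv ℝ ξ q) w₀ = (2 * Λ₀) • (x - q) := by
    have h := hkey (ContinuousLinearMap.adjoint (fderiv ℝ ξ q) w₀ + (2 * Λ₀) • (q - x))
    have := inner_self_eq_zero (𝕜 := ℝ).mp h
    have h2 : (2 * Λ₀) • (q - x) = -((2 * Λ₀) • (x - q)) := by
      rw [← smul_neg]; congr 1; abel
    rw [h2, add_neg_eq_zero] at this
    exact this
  refine ⟨(2 * Λ₀)⁻¹ • w₀, ?_⟩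
  have h2 : (2 : ℝ) * Λ₀ ≠ 0 := by
    simp [hΛ₀]
  rw [_root_.map_smul, hAw, smul_smul, inv_mul_cancel₀ h2, one_smul]

lemma nbd_arith (s L t a b e f : ℝ) (hs : 0 < s) (hL : 0 < L) (ht : 6 * L * t ≤ s)
    (ha : 0 ≤ a) (hb0 : 0 ≤ b) (he0 : 0 ≤ e) (hf0 : 0 ≤ f)
    (hb : b ≤ L * f * a) (he : s * e ≤ L * a * a) (hsum : a ≤ b + e)
    (hf : s * f < t) (h2t : a < 2 * t) : a = 0 := by
  have e2 : s * b ≤ s * (L * f * a) := mul_le_mul_of_nonneg_left hb hs.le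
  have e4 : (s * f) * (L * a) ≤ t * (L * a) :=
    mul_le_mul_of_nonneg_right hf.le (by positivity)
  have e6 : (L * a) * a ≤ (L * a) * (2 * t) :=
    mul_le_mul_of_nonneg_left h2t.le (by positivity)
  have e7 : s * a ≤ 3 * (L * t) * a := by nlinarith [e2, e4, e6, he, hsum]
  have e8 : 3 * (L * t) * a ≤ (s / 2) * a := by
    apply mul_le_mul_of_nonneg_right _ ha
    linarith
  have : (s / 2) * a ≤ 0 := by linarith
  have ha0 : a ≤ 0 := by nlinarith [half_pos hs]
  linarith

set_option maxHeartbeats 1600000 in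
lemma nbd_uniq {n m : ℕ}
    {ξ : EuclideanSpace ℝ (Fin n) → EuclideanSpace ℝ (Fin m)}
    (hξ : ContDiff ℝ (⊤ : ℕ∞) ξ)
    {M : Set (EuclideanSpace ℝ (Fin n))}
    (hM : M = {q | ξ q = 0})
    {s : ℝ} (hs : 0 < s)
    (hlow : ∀ q ∈ M, ∀ w : EuclideanSpace ℝ (Fin m),
      s * ‖w‖ ≤ ‖ContinuousLinearMap.adjoint (fderiv ℝ ξ q) w‖)
    (hsurjKA : ∀ q ∈ M, ∀ w, ∃ z,
      fderiv ℝ ξ q (ContinuousLinearMap.adjoint (fderiv ℝ ξ q) z) = w)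
    {L : ℝ} (hL : 0 < L)
    (hlip : ∀ a b, ‖fderiv ℝ ξ b - fderiv ℝ ξ a‖ ≤ L * ‖b - a‖)
    {τ : ℝ} (hτ0 : 0 < τ) (hτ : 6 * L * τ ≤ s)
    {x q₁ q₂ : EuclideanSpace ℝ (Fin n)}
    {v₁ v₂ : EuclideanSpace ℝ (Fin m)}
    (h1 : ξ q₁ = 0) (h2 : ξ q₂ = 0)
    (hx1 : x = q₁ + ContinuousLinearMap.adjoint (fderiv ℝ ξ q₁) v₁)
    (hx2 : x = q₂ + ContinuousLinearMap.adjoint (fderiv ℝ ξ q₂) v₂)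
    (hn1 : ‖ContinuousLinearMap.adjoint (fderiv ℝ ξ q₁) v₁‖ < τ)
    (hn2 : ‖ContinuousLinearMap.adjoint (fderiv ℝ ξ q₂) v₂‖ < τ) :
    q₁ = q₂ ∧ v₁ = v₂ := by
  have hq₁M : q₁ ∈ M := by rw [hM]; exact h1
  have hq₂M : q₂ ∈ M := by rw [hM]; exact h2
  set K := fderiv ℝ ξ q₁ with hK
  set K₂ := fderiv ℝ ξ q₂ with hK₂
  set A := ContinuousLinearMap.adjoint K with hA
  set A₂ := ContinuousLinearMap.adjoint K₂ with hA₂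
  set δ := q₂ - q₁ with hδdef
  have heq : q₁ + A v₁ = q₂ + A₂ v₂ := by rw [← hx1, ← hx2]
  have hδ : δ = A v₁ - A₂ v₂ := by
    rw [hδdef]
    calc q₂ - q₁ = (q₂ + A₂ v₂) - A₂ v₂ - q₁ := by abel
      _ = (q₁ + A v₁) - A₂ v₂ - q₁ := by rw [heq]
      _ = A v₁ - A₂ v₂ := by abel
  have hlip' := nbd_taylor hξ hL.le hlip
  have hKδ : ‖K δ‖ ≤ L * ‖δ‖ * ‖δ‖ := by
    have h := hlip' q₁ q₂
    rw [h1, h2] at h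
    rw [sub_self, zero_sub, norm_neg] at h
    rw [hδdef, hK]
    exact h
  obtain ⟨z, hz⟩ := hsurjKA q₁ hq₁M (K δ)
  set u := δ - A z with hu
  have hKu : K u = 0 := by rw [hu, map_sub, hz, sub_self]
  have hAzu : ⟪A z, u⟫ = 0 := by
    rw [hA, ContinuousLinearMap.adjoint_inner_left, hKu, inner_zero_right]
  have hδ2τ : ‖δ‖ < 2 * τ := by
    rw [hδ]
    calc ‖A v₁ - A₂ v₂‖ ≤ ‖A v₁‖ + ‖A₂ v₂‖ := norm_sub_le _ _
      _ < 2 * τ := by linarith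
  have hv₂τ : s * ‖v₂‖ < τ := lt_of_le_of_lt (hlow q₂ hq₂M v₂) hn2
  -- estimate 1 : tangential part
  have hu_est : ‖u‖ ≤ L * ‖v₂‖ * ‖δ‖ := by
    have hinner : (‖u‖ : ℝ) ^ 2 = -⟪A₂ v₂, u⟫ := by
      have e1 : (‖u‖ : ℝ) ^ 2 = ⟪u, u⟫ := (real_inner_self_eq_norm_sq u).symm
      have e2 : ⟪u, u⟫ = ⟪δ, u⟫ - ⟪A z, u⟫ := by
        rw [← inner_sub_left]
      have e3 : ⟪δ, u⟫ = ⟪A v₁, u⟫ - ⟪A₂ v₂, u⟫ := by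
        rw [← inner_sub_left, ← hδ]
      have e4 : ⟪A v₁, u⟫ = 0 := by
        rw [hA, ContinuousLinearMap.adjoint_inner_left, hKu, inner_zero_right]
      rw [e1, e2, e3, e4, hAzu]
      ring
    have e5 : -⟪A₂ v₂, u⟫ = ⟪v₂, (K - K₂) u⟫ := by
      rw [hA₂, ContinuousLinearMap.adjoint_inner_left]
      rw [ContinuousLinearMap.sub_apply, inner_sub_right, hKu, inner_zero_right]
      ring
    have e6 : ⟪v₂, (K - K₂) u⟫ ≤ ‖v₂‖ * (L * ‖δ‖ * ‖u‖) := by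
      calc ⟪v₂, (K - K₂) u⟫ ≤ ‖v₂‖ * ‖(K - K₂) u‖ := real_inner_le_norm _ _
        _ ≤ ‖v₂‖ * (L * ‖δ‖ * ‖u‖) := by
            apply mul_le_mul_of_nonneg_left _ (norm_nonneg v₂)
            calc ‖(K - K₂) u‖ ≤ ‖K - K₂‖ * ‖u‖ := (K - K₂).le_opNorm u
              _ ≤ L * ‖δ‖ * ‖u‖ := by
                  apply mul_le_mul_of_nonneg_right _ (norm_nonneg u)
                  have := hlip q₂ q₁
                  rwa [← hK, ← hK₂, ← neg_sub q₂ q₁, norm_neg, ← hδdef] at this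
    have hsq : (‖u‖ : ℝ) ^ 2 ≤ L * ‖v₂‖ * ‖δ‖ * ‖u‖ := by
      rw [hinner, e5]
      calc ⟪v₂, (K - K₂) u⟫ ≤ ‖v₂‖ * (L * ‖δ‖ * ‖u‖) := e6
        _ = L * ‖v₂‖ * ‖δ‖ * ‖u‖ := by ring
    rcases eq_or_lt_of_le (norm_nonneg u) with h0 | h0
    · rw [← h0]; positivity
    · nlinarith [hsq]
  -- estimate 2 : normal part
  have hAz_est : s * ‖A z‖ ≤ L * ‖δ‖ * ‖δ‖ := by
    have hinner : (‖A z‖ : ℝ) ^ 2 = ⟪z, K δ⟫ := by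
      have e1 : (‖A z‖ : ℝ) ^ 2 = ⟪A z, A z⟫ := (real_inner_self_eq_norm_sq _).symm
      have e2 : A z = δ - u := by rw [hu]; abel
      calc (‖A z‖ : ℝ) ^ 2 = ⟪A z, δ - u⟫ := by rw [e1, ← e2]
        _ = ⟪A z, δ⟫ - ⟪A z, u⟫ := inner_sub_right _ _ _
        _ = ⟪A z, δ⟫ := by rw [hAzu]; ring
        _ = ⟪z, K δ⟫ := by rw [hA, ContinuousLinearMap.adjoint_inner_left]
    have hz_bound : s * ‖z‖ ≤ ‖A z‖ := hlow q₁ hq₁M z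
    have hsq : s * (‖A z‖ ^ 2) ≤ ‖A z‖ * (L * ‖δ‖ * ‖δ‖) := by
      have h1' : (‖A z‖ : ℝ) ^ 2 ≤ ‖z‖ * ‖K δ‖ := by
        rw [hinner]
        exact real_inner_le_norm _ _
      calc s * (‖A z‖ ^ 2) ≤ s * (‖z‖ * ‖K δ‖) := by
            apply mul_le_mul_of_nonneg_left h1' hs.le
        _ = (s * ‖z‖) * ‖K δ‖ := by ring
        _ ≤ ‖A z‖ * (L * ‖δ‖ * ‖δ‖) := by
            apply mul_le_mul hz_bound hKδ (norm_nonneg _) (norm_nonneg _)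
    rcases eq_or_lt_of_le (norm_nonneg (A z)) with h0 | h0
    · rw [← h0]; rw [mul_zero]; positivity
    · nlinarith [hsq]
  -- combine
  have hδsum : ‖δ‖ ≤ ‖u‖ + ‖A z‖ := by
    calc ‖δ‖ = ‖u + A z‖ := by rw [hu]; congr 1; abel
      _ ≤ ‖u‖ + ‖A z‖ := norm_add_le _ _
  have hδ0 : ‖δ‖ = 0 :=
    nbd_arith s L τ ‖δ‖ ‖u‖ ‖A z‖ ‖v₂‖ hs hL hτ (norm_nonneg δ) (norm_nonneg u)
      (norm_nonneg (A z)) (norm_nonneg v₂) hu_est hAz_est hδsum hv₂τ hδ2τ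
  have hδz : δ = 0 := norm_eq_zero.mp hδ0
  have hq : q₁ = q₂ := by
    have := sub_eq_zero.mp hδz
    exact this.symm
  subst hq
  refine ⟨rfl, ?_⟩
  have hAA : A₂ = A := by rw [hA₂, hA, hK₂, hK]
  have hAv : A (v₁ - v₂) = 0 := by
    rw [map_sub, sub_eq_zero]
    have h' : A v₁ - A₂ v₂ = 0 := by rw [← hδ, hδz]
    rw [hAA] at h'
    exact sub_eq_zero.mp h'
  have hlow' := hlow q₁ hq₁M (v₁ - v₂)
  have hAv' : ContinuousLinearMap.adjoint (fderiv ℝ ξ q₁) (v₁ - v₂) = 0 := by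
    rw [← hK, ← hA]; exact hAv
  rw [hAv', norm_zero] at hlow'
  have h9 : ‖v₁ - v₂‖ ≤ 0 := by nlinarith [hlow', hs, norm_nonneg (v₁ - v₂)]
  have h10 : v₁ - v₂ = 0 := norm_eq_zero.mp (le_antisymm h9 (norm_nonneg _))
  exact sub_eq_zero.mp h10


set_option maxHeartbeats 1600000 in
/-- **Unique normal-bundle decomposition on a uniform tube.**
Under the uniform rank condition and the uniform Hessian bound, there is `τ > 0` such
that every `x` with `dist(x, M) < τ` admits a unique decomposition `x = q + Dξ(q)* v`
with `ξ(q) = 0` and `‖Dξ(q)* v‖ < τ`; moreover for this decomposition `q` is the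
nearest point of `M` to `x`. -/
theorem normal_bundle_decomposition
    (n m : ℕ) (hm : 1 ≤ m) (hnm : m ≤ n)
    (ξ : EuclideanSpace ℝ (Fin n) → EuclideanSpace ℝ (Fin m))
    (hξ : ContDiff ℝ (⊤ : ℕ∞) ξ)
    (M : Set (EuclideanSpace ℝ (Fin n)))
    (hM : M = {q | ξ q = 0})
    (hMne : M.Nonempty)
    (c : ℝ) (hc : 0 < c)
    (hrank : ∀ q ∈ M, ∀ w : EuclideanSpace ℝ (Fin m),
      c * ‖w‖ ^ 2 ≤ ⟪fderiv ℝ ξ q (ContinuousLinearMap.adjoint (fderiv ℝ ξ q) w), w⟫)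
    (C : ℝ) (hC : 0 < C)
    (hHess : ∀ x : EuclideanSpace ℝ (Fin n), ∀ i : Fin m,
      ‖iteratedFDeriv ℝ 2 (fun y => ξ y i) x‖ ≤ C) :
    ∃ τ > (0 : ℝ), ∀ x : EuclideanSpace ℝ (Fin n),
      Metric.infDist x M < τ →
      (∃! p : EuclideanSpace ℝ (Fin n) × EuclideanSpace ℝ (Fin m),
        ξ p.1 = 0 ∧
        x = p.1 + ContinuousLinearMap.adjoint (fderiv ℝ ξ p.1) p.2 ∧
        ‖ContinuousLinearMap.adjoint (fderiv ℝ ξ p.1) p.2‖ < τ) ∧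
      (∀ q : EuclideanSpace ℝ (Fin n), ∀ v : EuclideanSpace ℝ (Fin m),
        ξ q = 0 →
        x = q + ContinuousLinearMap.adjoint (fderiv ℝ ξ q) v →
        ‖ContinuousLinearMap.adjoint (fderiv ℝ ξ q) v‖ < τ →
        ‖x - q‖ = Metric.infDist x M) := by
  classical
  have hs : 0 < Real.sqrt c := Real.sqrt_pos.mpr hc
  set s : ℝ := Real.sqrt c with hsdef
  set L : ℝ := Real.sqrt m * C + 1 with hLdef
  have hL : 0 < L := by
    have : (0:ℝ) ≤ Real.sqrt m * C := mul_nonneg (Real.sqrt_nonneg _) hC.le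
    rw [hLdef]; linarith
  have hlip : ∀ a b, ‖fderiv ℝ ξ b - fderiv ℝ ξ a‖ ≤ L * ‖b - a‖ := by
    intro a b
    calc ‖fderiv ℝ ξ b - fderiv ℝ ξ a‖ ≤ (Real.sqrt m * C) * ‖b - a‖ :=
          nbd_lip n m ξ hξ C hC hHess a b
      _ ≤ L * ‖b - a‖ := by
          apply mul_le_mul_of_nonneg_right _ (norm_nonneg _)
          rw [hLdef]; linarith
  have hlow : ∀ q ∈ M, ∀ w : EuclideanSpace ℝ (Fin m),
      s * ‖w‖ ≤ ‖ContinuousLinearMap.adjoint (fderiv ℝ ξ q) w‖ :=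
    fun q hq w => nbd_lower hc hrank hq w
  have hsurjKA : ∀ q ∈ M, ∀ w, ∃ z,
      fderiv ℝ ξ q (ContinuousLinearMap.adjoint (fderiv ℝ ξ q) z) = w :=
    fun q hq => nbd_surj hc hrank hq
  set τ : ℝ := s / (6 * L) with hτdef
  have hτ0 : 0 < τ := div_pos hs (by linarith)
  have hτ : 6 * L * τ ≤ s := le_of_eq (by rw [hτdef]; field_simp)
  refine ⟨τ, hτ0, ?_⟩
  intro x hx
  have hMclosed : IsClosed M := by
    rw [hM]
    have hset : {q | ξ q = 0} = ξ ⁻¹' {0} := by ext y; simp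
    rw [hset]
    exact IsClosed.preimage hξ.continuous isClosed_singleton
  obtain ⟨q₀, hq₀M, hd⟩ := hMclosed.exists_infDist_eq_dist hMne x
  have hmin : ∀ y ∈ M, ‖q₀ - x‖ ≤ ‖y - x‖ := by
    intro y hy
    have h1 : dist x q₀ ≤ dist x y := hd ▸ infDist_le_dist_of_mem hy
    rw [dist_eq_norm, dist_eq_norm] at h1
    calc ‖q₀ - x‖ = ‖x - q₀‖ := norm_sub_rev _ _
      _ ≤ ‖x - y‖ := h1
      _ = ‖y - x‖ := norm_sub_rev _ _
  obtain ⟨v₀, hv₀⟩ := nbd_exist hξ hM hq₀M (hsurjKA q₀ hq₀M) hmin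
  have hq₀0 : ξ q₀ = 0 := by rw [hM] at hq₀M; exact hq₀M
  have hx₀ : x = q₀ + ContinuousLinearMap.adjoint (fderiv ℝ ξ q₀) v₀ := by
    rw [hv₀]; abel
  have hnd : ‖x - q₀‖ = Metric.infDist x M := by rw [hd, dist_eq_norm]
  have hnx₀ : ‖ContinuousLinearMap.adjoint (fderiv ℝ ξ q₀) v₀‖ < τ := by
    rw [hv₀, hnd]; exact hx
  constructor
  · refine ⟨(q₀, v₀), ⟨hq₀0, hx₀, hnx₀⟩, ?_⟩
    rintro ⟨q, v⟩ ⟨hqv0, hqvx, hqvn⟩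
    obtain ⟨hq, hv⟩ := nbd_uniq hξ hM hs hlow hsurjKA hL hlip hτ0 hτ
      hqv0 hq₀0 hqvx hx₀ hqvn hnx₀
    exact Prod.ext hq hv
  · intro q v hq0 hxq hnq
    obtain ⟨hq, hv⟩ := nbd_uniq hξ hM hs hlow hsurjKA hL hlip hτ0 hτ
      hq0 hq₀0 hxq hx₀ hnq hnx₀
    rw [hq, hnd]
end

section
/- Let q ∈ M and suppose ⟨Dξ(q)Dξ(q)* w, w⟩ ≥ c‖w‖² for all w ∈ ℝᵐ and ‖D²ξᵢ(q)‖ ≤ C for i = 1,…,m, where c, C > 0. Then for every v ∈ ℝᵐ with ‖v‖ ≤ √(min(1,c)) / (2C√m), every δq ∈ ker Dξ(q), and every δv ∈ ℝᵐ, the differential of the normal-bundle parametrization satisfies the uniform lower bound ‖δq + Σᵢ₌₁ᵐ vᵢ · Hᵢ(q)(δq) + Dξ(q)* δv‖ ≥ (√(min(1,c))/2) · (‖δq‖² + ‖δv‖²)^{1/2}, where Hᵢ(q) : ℝⁿ → ℝⁿ denotes the Hessian of the i-th component ξᵢ at q regarded as a self-adjoint linear map. -/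
set_option maxHeartbeats 1000000


open Metric MeasureTheory
open scoped RealInnerProductSpace

/-- **Uniform lower bound on the differential of the normal-bundle parametrization.**
At a point `q ∈ M` where `⟨Dξ(q)Dξ(q)* w, w⟩ ≥ c‖w‖²` and `‖D²ξᵢ(q)‖ ≤ C`,
for every `v` with `‖v‖ ≤ √(min(1,c))/(2C√m)`, every `δq ∈ ker Dξ(q)` and every `δv`,
`‖δq + Σᵢ vᵢ Hᵢ(q) δq + Dξ(q)* δv‖ ≥ (√(min(1,c))/2)·√(‖δq‖² + ‖δv‖²)`,
where `Hᵢ(q)` is the self-adjoint map associated to the second derivative `D²ξᵢ(q)`. -/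
theorem normal_bundle_differential_lower_bound
    (n m : ℕ) (hm : 1 ≤ m) (hnm : m ≤ n)
    (ξ : EuclideanSpace ℝ (Fin n) → EuclideanSpace ℝ (Fin m))
    (hξ : ContDiff ℝ (⊤ : ℕ∞) ξ)
    (q : EuclideanSpace ℝ (Fin n))
    (hq : ξ q = 0)
    (c C : ℝ) (hc : 0 < c) (hC : 0 < C)
    (hrank : ∀ w : EuclideanSpace ℝ (Fin m),
      c * ‖w‖ ^ 2 ≤ ⟪fderiv ℝ ξ q (ContinuousLinearMap.adjoint (fderiv ℝ ξ q) w), w⟫)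
    (H : Fin m → (EuclideanSpace ℝ (Fin n) →L[ℝ] EuclideanSpace ℝ (Fin n)))
    (hH : ∀ (i : Fin m) (u w : EuclideanSpace ℝ (Fin n)),
      ⟪H i u, w⟫ = iteratedFDeriv ℝ 2 (fun y => ξ y i) q ![u, w])
    (hHess : ∀ i : Fin m, ‖iteratedFDeriv ℝ 2 (fun y => ξ y i) q‖ ≤ C) :
    ∀ v : EuclideanSpace ℝ (Fin m),
      ‖v‖ ≤ Real.sqrt (min 1 c) / (2 * C * Real.sqrt m) →
      ∀ δq : EuclideanSpace ℝ (Fin n), fderiv ℝ ξ q δq = 0 →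
      ∀ δv : EuclideanSpace ℝ (Fin m),
        Real.sqrt (min 1 c) / 2 * Real.sqrt (‖δq‖ ^ 2 + ‖δv‖ ^ 2) ≤
          ‖δq + (∑ i, v i • H i δq)
            + ContinuousLinearMap.adjoint (fderiv ℝ ξ q) δv‖ := by
  intro v hv δq hδq δv
  set A := fderiv ℝ ξ q with hA
  set s := Real.sqrt (min 1 c) with hs
  have hmin : (0:ℝ) < min 1 c := lt_min one_pos hc
  have hspos : 0 < s := Real.sqrt_pos.2 hmin
  have hmpos : (0:ℝ) < (m:ℝ) := by exact_mod_cast hm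
  have hsm : 0 < Real.sqrt m := Real.sqrt_pos.2 hmpos
  set r := Real.sqrt (‖δq‖ ^ 2 + ‖δv‖ ^ 2) with hr
  have hrnn : 0 ≤ r := Real.sqrt_nonneg _
  have hδqr : ‖δq‖ ≤ r := by
    rw [hr]
    have h0 : ‖δq‖ ^ 2 ≤ ‖δq‖ ^ 2 + ‖δv‖ ^ 2 := by nlinarith [sq_nonneg ‖δv‖]
    have := Real.sqrt_le_sqrt h0
    rwa [Real.sqrt_sq (norm_nonneg _)] at this
  -- orthogonality
  have horth : ⟪δq, ContinuousLinearMap.adjoint A δv⟫ = 0 := by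
    rw [real_inner_comm, ContinuousLinearMap.adjoint_inner_left, hδq, inner_zero_right]
  -- A* lower bound
  have hAv : c * ‖δv‖ ^ 2 ≤ ‖ContinuousLinearMap.adjoint A δv‖ ^ 2 := by
    have h1 := hrank δv
    rw [← ContinuousLinearMap.adjoint_inner_right, real_inner_self_eq_norm_sq] at h1
    exact h1
  -- Pythagoras
  have hpy : ‖δq + ContinuousLinearMap.adjoint A δv‖ ^ 2
      = ‖δq‖ ^ 2 + ‖ContinuousLinearMap.adjoint A δv‖ ^ 2 := by
    rw [norm_add_sq_real, horth]; ring
  have hlow2 : min 1 c * (‖δq‖ ^ 2 + ‖δv‖ ^ 2)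
      ≤ ‖δq + ContinuousLinearMap.adjoint A δv‖ ^ 2 := by
    rw [hpy]
    have h1 : min 1 c * ‖δq‖ ^ 2 ≤ ‖δq‖ ^ 2 := by
      nlinarith [min_le_left 1 c, sq_nonneg ‖δq‖]
    have h2 : min 1 c * ‖δv‖ ^ 2 ≤ c * ‖δv‖ ^ 2 := by
      nlinarith [min_le_right 1 c, sq_nonneg ‖δv‖]
    nlinarith
  have hlow : s * r ≤ ‖δq + ContinuousLinearMap.adjoint A δv‖ := by
    have := Real.sqrt_le_sqrt hlow2
    rwa [Real.sqrt_mul hmin.le, Real.sqrt_sq (norm_nonneg _), ← hs, ← hr] at this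
  -- Hessian operator norm bound
  have hHle : ∀ i u, ‖H i u‖ ≤ C * ‖u‖ := by
    intro i u
    have h1 : ‖H i u‖ ^ 2 ≤ C * ‖u‖ * ‖H i u‖ := by
      have h2 : ‖H i u‖ ^ 2 = ⟪H i u, H i u⟫ := (real_inner_self_eq_norm_sq _).symm
      rw [h2, hH i u (H i u)]
      calc iteratedFDeriv ℝ 2 (fun y => ξ y i) q ![u, H i u]
          ≤ ‖iteratedFDeriv ℝ 2 (fun y => ξ y i) q ![u, H i u]‖ := le_abs_self _
        _ ≤ ‖iteratedFDeriv ℝ 2 (fun y => ξ y i) q‖ * ∏ j, ‖![u, H i u] j‖ :=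
            ContinuousMultilinearMap.le_opNorm _ _
        _ ≤ C * (‖u‖ * ‖H i u‖) := by
            rw [Fin.prod_univ_two]
            simp only [Matrix.cons_val_zero, Matrix.cons_val_one, Matrix.head_cons]
            exact mul_le_mul_of_nonneg_right (hHess i) (by positivity)
        _ = C * ‖u‖ * ‖H i u‖ := by ring
    rcases (norm_nonneg (H i u)).eq_or_lt.imp Eq.symm id with h0 | h0
    · rw [h0]; positivity
    · refine le_of_mul_le_mul_right ?_ h0
      nlinarith [h1]
  -- sum of |v i| bound
  have hsumv : ∑ i, |v i| ≤ Real.sqrt m * ‖v‖ := by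
    have hcs : (∑ i, |v i|) ^ 2 ≤ (m : ℝ) * ‖v‖ ^ 2 := by
      have := sq_sum_le_card_mul_sum_sq (s := (Finset.univ : Finset (Fin m)))
        (f := fun i => |v i|)
      simp only [Finset.card_univ, Fintype.card_fin, sq_abs] at this
      have hnv : ‖v‖ ^ 2 = ∑ i, v i ^ 2 := by
        rw [EuclideanSpace.norm_eq, Real.sq_sqrt (by positivity)]
        exact Finset.sum_congr rfl fun i _ => by rw [Real.norm_eq_abs, sq_abs]
      rw [hnv]
      exact this
    have h1 : 0 ≤ ∑ i, |v i| := Finset.sum_nonneg fun i _ => abs_nonneg _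
    nlinarith [Real.sq_sqrt hmpos.le, Real.sqrt_nonneg (m:ℝ), norm_nonneg v,
      mul_nonneg (Real.sqrt_nonneg (m:ℝ)) (norm_nonneg v)]
  -- error term bound
  have hE : ‖∑ i, v i • H i δq‖ ≤ s / 2 * r := by
    have h1 : ‖∑ i, v i • H i δq‖ ≤ ∑ i, |v i| * (C * ‖δq‖) := by
      refine (norm_sum_le _ _).trans (Finset.sum_le_sum fun i _ => ?_)
      rw [norm_smul, Real.norm_eq_abs]
      exact mul_le_mul_of_nonneg_left (hHle i δq) (abs_nonneg _)
    have h2 : ∑ i, |v i| * (C * ‖δq‖) = (∑ i, |v i|) * (C * ‖δq‖) := by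
      rw [← Finset.sum_mul]
    have h3 : (∑ i, |v i|) * (C * ‖δq‖) ≤ (Real.sqrt m * ‖v‖) * (C * ‖δq‖) :=
      mul_le_mul_of_nonneg_right hsumv (by positivity)
    have h4 : Real.sqrt m * ‖v‖ * C ≤ s / 2 := by
      have := mul_le_mul_of_nonneg_left hv (by positivity : (0:ℝ) ≤ Real.sqrt m * C)
      calc Real.sqrt m * ‖v‖ * C = Real.sqrt m * C * ‖v‖ := by ring
        _ ≤ Real.sqrt m * C * (s / (2 * C * Real.sqrt m)) := this
        _ = s / 2 := by field_simp
    calc ‖∑ i, v i • H i δq‖ ≤ Real.sqrt m * ‖v‖ * C * ‖δq‖ := by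
          rw [h2] at h1; linarith [h1, h3]
      _ ≤ s / 2 * ‖δq‖ := mul_le_mul_of_nonneg_right h4 (norm_nonneg _)
      _ ≤ s / 2 * r := mul_le_mul_of_nonneg_left hδqr (by positivity)
  -- triangle inequality
  have htri : ‖δq + ContinuousLinearMap.adjoint A δv‖ ≤
      ‖δq + (∑ i, v i • H i δq) + ContinuousLinearMap.adjoint A δv‖
      + ‖∑ i, v i • H i δq‖ := by
    have heq : δq + ContinuousLinearMap.adjoint A δv =
        (δq + (∑ i, v i • H i δq) + ContinuousLinearMap.adjoint A δv)
        + (-(∑ i, v i • H i δq)) := by abel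
    rw [heq]
    exact (norm_add_le _ _).trans_eq (by rw [norm_neg])
  have : s * r ≤ ‖δq + (∑ i, v i • H i δq) + ContinuousLinearMap.adjoint A δv‖
      + s / 2 * r := by linarith
  linarith
end

section
/- Let n ≥ m ≥ 1, let A be a real n×m matrix such that AᵀA is positive definite, let U be a real n×(n−m) matrix with UᵀU = I_{n−m} and AᵀU = 0, and let E be any real n×n matrix. Form the n×n matrix W whose first n−m columns are the columns of (I_n + E)·U and whose last m columns are the columns of A. Then |det W| = |det(I_{n−m} + Uᵀ E U)| · √(det(AᵀA)). -/
open Matrix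

/-!
With `V = [U | A]`, the Gram-type product `Vᵀ [X | A]` is block lower triangular because
`UᵀA = 0`, so `det V · det [X | A] = det (UᵀX) · det (AᵀA)`. Taking `X = U` gives
`(det V)² = det (AᵀA) > 0`, and taking `X = (I + E)U` gives
`det V · det W = det (I + UᵀEU) · det (AᵀA)`; dividing by `|det V| = √det (AᵀA)` finishes.
-/

theorem Matrix.det_submatrix_fromCols_mul_det_submatrix_fromCols
    {R ι κ μ : Type*} [CommRing R] [Fintype ι] [DecidableEq ι] [Fintype κ] [DecidableEq κ]
    [Fintype μ] [DecidableEq μ] (e : κ ⊕ μ ≃ ι)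
    (U X : Matrix ι κ R) (A : Matrix ι μ R) (hUA : Uᵀ * A = 0) :
    ((fromCols U A).submatrix id e.symm).det * ((fromCols X A).submatrix id e.symm).det
      = (Uᵀ * X).det * (Aᵀ * A).det := by
  rw [← det_transpose, ← det_mul, transpose_submatrix,
    ← submatrix_mul _ _ _ _ _ Function.bijective_id, transpose_fromCols,
    fromRows_mul_fromCols, hUA, det_submatrix_equiv_self, det_fromBlocks_zero₁₂]

theorem block_determinant_factorization_general
    (k m : ℕ)
    (A : Matrix (Fin (k + m)) (Fin m) ℝ)
    (hA : (Aᵀ * A).PosDef)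
    (U : Matrix (Fin (k + m)) (Fin k) ℝ)
    (hU : Uᵀ * U = 1)
    (hAU : Aᵀ * U = 0)
    (E : Matrix (Fin (k + m)) (Fin (k + m)) ℝ) :
    |((Matrix.fromCols ((1 + E) * U) A).submatrix id
        (finSumFinEquiv (m := k) (n := m)).symm).det|
      = |(1 + Uᵀ * E * U).det| * Real.sqrt (Aᵀ * A).det := by
  set v := ((fromCols U A).submatrix id (finSumFinEquiv (m := k) (n := m)).symm).det
  set w := ((fromCols ((1 + E) * U) A).submatrix id (finSumFinEquiv (m := k) (n := m)).symm).det
  set d := (Aᵀ * A).det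
  have hd : 0 < d := hA.det_pos
  have hUA : Uᵀ * A = 0 := by
    rw [← transpose_transpose (Uᵀ * A), transpose_mul, transpose_transpose, hAU, transpose_zero]
  have hvv : v * v = d := by
    rw [det_submatrix_fromCols_mul_det_submatrix_fromCols _ U U A hUA, hU, det_one, one_mul]
  have hgram : Uᵀ * ((1 + E) * U) = 1 + Uᵀ * E * U := by
    rw [Matrix.add_mul, Matrix.one_mul, Matrix.mul_add, hU, ← Matrix.mul_assoc]
  have hvw : v * w = (1 + Uᵀ * E * U).det * d := by
    rw [← hgram]
    exact det_submatrix_fromCols_mul_det_submatrix_fromCols _ U ((1 + E) * U) A hUA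
  have habs_v : |v| = Real.sqrt d := by rw [← hvv, Real.sqrt_mul_self_eq_abs]
  have hsqrt : 0 < Real.sqrt d := Real.sqrt_pos.mpr hd
  refine mul_left_cancel₀ hsqrt.ne' ?_
  calc Real.sqrt d * |w| = |v * w| := by rw [abs_mul, habs_v]
    _ = |(1 + Uᵀ * E * U).det| * (Real.sqrt d * Real.sqrt d) := by
      rw [hvw, abs_mul, abs_of_pos hd, Real.mul_self_sqrt hd.le]
    _ = _ := by ring

/-- **Block-determinant factorization for the normal-bundle Jacobian.**
Let `n = k + m`, `A` a real `n×m` matrix with `AᵀA` positive definite, `U` a real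
`n×k` matrix with `UᵀU = I` and `AᵀU = 0`, and `E` any real `n×n` matrix. The `n×n`
matrix `W` whose first `k` columns are those of `(I + E)U` and whose last `m` columns
are those of `A` satisfies `|det W| = |det(I + UᵀEU)| · √(det(AᵀA))`. -/
theorem block_determinant_factorization
    (k m : ℕ) (hm : 1 ≤ m)
    (A : Matrix (Fin (k + m)) (Fin m) ℝ)
    (hA : (Aᵀ * A).PosDef)
    (U : Matrix (Fin (k + m)) (Fin k) ℝ)
    (hU : Uᵀ * U = 1)
    (hAU : Aᵀ * U = 0)
    (E : Matrix (Fin (k + m)) (Fin (k + m)) ℝ) :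
    |((Matrix.fromCols ((1 + E) * U) A).submatrix id
        (finSumFinEquiv (m := k) (n := m)).symm).det|
      = |(1 + Uᵀ * E * U).det| * Real.sqrt (Aᵀ * A).det :=
  block_determinant_factorization_general k m A hA U hU hAU E
end

section
/- Let S : ℝᵈ → ℝᵈ be a continuously differentiable involution (S ∘ S = id), let π : ℝᵈ → [0, ∞) be Lebesgue-integrable, set J(z) := |det DS(z)| (absolute Jacobian determinant of S at z), and define the Metropolis–Hastings acceptance probability α(z) := min{1, π(S(z))·J(z)/π(z)} when π(z) > 0 and α(z) := 1 when π(z) = 0. Then the Metropolis–Hastings kernel with deterministic proposal S, P(z, ·) := α(z)·δ_{S(z)} + (1 − α(z))·δ_z, satisfies detailed balance with respect to the measure π(z)dz: for all Borel sets A, B ⊆ ℝᵈ, ∫_A P(z, B) π(z) dz = ∫_B P(z, A) π(z) dz. -/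
open MeasureTheory

/-! The accepted mass `α π = min π ((π ∘ S) J)` satisfies `J · (α π) ∘ S = α π`, since
`J (S z) J z = 1`. So the change of variables `z ↦ S z` carries the accepted flux
`∫_{A ∩ S⁻¹ B} α π` onto `∫_{B ∩ S⁻¹ A} α π`, while the rejected mass `∫_{A ∩ B} (1 - α) π`
is symmetric in `A` and `B`. -/

theorem Function.Involutive.det_fderiv_apply_mul_det_fderiv {𝕜 E : Type*}
    [NontriviallyNormedField 𝕜] [NormedAddCommGroup E] [NormedSpace 𝕜 E] {S : E → E}
    (hS : Function.Involutive S) {z : E}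
    (hSz : DifferentiableAt 𝕜 S (S z)) (hz : DifferentiableAt 𝕜 S z) :
    (fderiv 𝕜 S (S z)).det * (fderiv 𝕜 S z).det = 1 := by
  have hcomp : (fderiv 𝕜 S (S z)).comp (fderiv 𝕜 S z) = ContinuousLinearMap.id 𝕜 E := by
    rw [← fderiv_comp z hSz hz, hS.comp_self, fderiv_id]
  simpa [ContinuousLinearMap.det, LinearMap.det_comp] using congrArg ContinuousLinearMap.det hcomp

section ChangeOfVariables

variable {E F : Type*} [NormedAddCommGroup E] [NormedSpace ℝ E] [FiniteDimensional ℝ E]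
  [MeasurableSpace E] [BorelSpace E] [NormedAddCommGroup F] [NormedSpace ℝ F]
  (μ : Measure E) [μ.IsAddHaarMeasure]

theorem setIntegral_image_eq_of_abs_det_smul_comp_eq {s : Set E} (hs : MeasurableSet s)
    {f : E → E} {f' : E → E →L[ℝ] E} (hf' : ∀ x ∈ s, HasFDerivWithinAt f (f' x) s x)
    (hf : Set.InjOn f s) {g : E → F} (hg : ∀ x ∈ s, |(f' x).det| • g (f x) = g x) :
    ∫ x in f '' s, g x ∂μ = ∫ x in s, g x ∂μ := by
  rw [integral_image_eq_integral_abs_det_fderiv_smul μ hs hf' hf]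
  exact setIntegral_congr_fun hs hg

variable {S : E → E}

theorem Function.Involutive.integrable_abs_det_fderiv_smul_comp (hS : Function.Involutive S)
    (hSd : Differentiable ℝ S) {g : E → F} (hg : Integrable g μ) :
    Integrable (fun x => |(fderiv ℝ S x).det| • g (S x)) μ := by
  have h := integrableOn_image_iff_integrableOn_abs_det_fderiv_smul μ MeasurableSet.univ
    (fun x _ => (hSd x).hasFDerivAt.hasFDerivWithinAt) hS.injective.injOn g
  rw [Set.image_univ, hS.surjective.range_eq, integrableOn_univ, integrableOn_univ] at h
  exact h.1 hg

theorem Function.Involutive.setIntegral_inter_preimage_comm (hS : Function.Involutive S)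
    (hSd : Differentiable ℝ S) {g : E → F} (hg : ∀ x, |(fderiv ℝ S x).det| • g (S x) = g x)
    {A B : Set E} (hA : MeasurableSet A) (hB : MeasurableSet B) :
    ∫ z in A ∩ S ⁻¹' B, g z ∂μ = ∫ z in B ∩ S ⁻¹' A, g z ∂μ := by
  have hSm : Measurable S := hSd.continuous.measurable
  have himage : S '' (A ∩ S ⁻¹' B) = B ∩ S ⁻¹' A := by
    rw [hS.image_eq_preimage_symm, Set.preimage_inter, ← Set.preimage_comp, hS.comp_self,
      Set.preimage_id, Set.inter_comm]
  rw [← himage, setIntegral_image_eq_of_abs_det_smul_comp_eq μ (hA.inter (hSm hB))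
    (fun x _ => (hSd x).hasFDerivAt.hasFDerivWithinAt) hS.injective.injOn (fun x _ => hg x)]

end ChangeOfVariables

theorem setIntegral_acceptReject_eq {X : Type*} [MeasurableSpace X] {μ : Measure X}
    {S : X → X} (hS : Measurable S) {α π : X → ℝ} (haccept : Integrable (fun z => α z * π z) μ)
    (hreject : Integrable (fun z => (1 - α z) * π z) μ) (A : Set X) {B : Set X}
    (hB : MeasurableSet B) :
    ∫ z in A, (α z * B.indicator (fun _ => (1:ℝ)) (S z)
        + (1 - α z) * B.indicator (fun _ => (1:ℝ)) z) * π z ∂μ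
      = ∫ z in A ∩ S ⁻¹' B, α z * π z ∂μ + ∫ z in A ∩ B, (1 - α z) * π z ∂μ := by
  have hsplit : ∀ z, (α z * B.indicator (fun _ => (1:ℝ)) (S z)
      + (1 - α z) * B.indicator (fun _ => (1:ℝ)) z) * π z
      = (S ⁻¹' B).indicator (fun z => α z * π z) z
        + B.indicator (fun z => (1 - α z) * π z) z := by
    intro z
    by_cases h1 : S z ∈ B <;> by_cases h2 : z ∈ B <;>
      simp only [Set.indicator, Set.mem_preimage, h1, h2, if_true, if_false] <;> ring
  simp_rw [hsplit]
  rw [integral_add (haccept.indicator (hS hB)).integrableOn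
      (hreject.indicator hB).integrableOn, setIntegral_indicator (hS hB), setIntegral_indicator hB]

theorem acceptance_mul_eq_min {a p q : ℝ} (hp : 0 ≤ p) (hq : 0 ≤ q)
    (ha : 0 < p → a = min 1 (q / p)) (ha1 : p = 0 → a = 1) : a * p = min p q := by
  rcases hp.lt_or_eq with hp | hp
  · rw [ha hp, min_mul_of_nonneg _ _ hp.le, one_mul, div_mul_cancel₀ _ hp.ne']
  · rw [ha1 hp.symm, ← hp, one_mul, min_eq_left hq]

/-- **Detailed balance of the Metropolis–Hastings kernel with deterministic
involutive proposal.** Let `S` be a `C¹` involution of `ℝᵈ`, `π ≥ 0` Lebesgue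
integrable, `J(z) = |det DS(z)|`, and `α(z) = min{1, π(S z)·J(z)/π(z)}` when
`π(z) > 0`, `α(z) = 1` otherwise. Then the kernel
`P(z,·) = α(z) δ_{S(z)} + (1 − α(z)) δ_z` satisfies detailed balance with respect
to `π(z)dz`: for all Borel `A, B`, `∫_A P(z,B) π(z) dz = ∫_B P(z,A) π(z) dz`. -/
theorem metropolis_involution_detailed_balance
    (d : ℕ)
    (S : EuclideanSpace ℝ (Fin d) → EuclideanSpace ℝ (Fin d))
    (hS : ContDiff ℝ 1 S)
    (hinv : ∀ z, S (S z) = z)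
    (π : EuclideanSpace ℝ (Fin d) → ℝ)
    (hπ0 : ∀ z, 0 ≤ π z)
    (hπint : MeasureTheory.Integrable π)
    (J : EuclideanSpace ℝ (Fin d) → ℝ)
    (hJ : ∀ z, J z = |LinearMap.det ((fderiv ℝ S z).toLinearMap)|)
    (α : EuclideanSpace ℝ (Fin d) → ℝ)
    (hα : ∀ z, 0 < π z → α z = min 1 (π (S z) * J z / π z))
    (hα1 : ∀ z, π z = 0 → α z = 1) :
    ∀ A B : Set (EuclideanSpace ℝ (Fin d)), MeasurableSet A → MeasurableSet B →
      (∫ z in A,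
        (α z * B.indicator (fun _ => (1:ℝ)) (S z)
          + (1 - α z) * B.indicator (fun _ => (1:ℝ)) z) * π z)
      = ∫ z in B,
        (α z * A.indicator (fun _ => (1:ℝ)) (S z)
          + (1 - α z) * A.indicator (fun _ => (1:ℝ)) z) * π z := by
  intro A B hA hB
  have hSi : Function.Involutive S := hinv
  have hSd : Differentiable ℝ S := hS.differentiable one_ne_zero
  have hJ' : ∀ z, J z = |(fderiv ℝ S z).det| := hJ
  have hJ0 : ∀ z, 0 ≤ J z := fun z => hJ' z ▸ abs_nonneg _
  have hJS : ∀ z, J (S z) * J z = 1 := fun z => by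
    rw [hJ', hJ', ← abs_mul, hSi.det_fderiv_apply_mul_det_fderiv (hSd _) (hSd z), abs_one]
  have hαπ : ∀ z, α z * π z = min (π z) (π (S z) * J z) := fun z =>
    acceptance_mul_eq_min (hπ0 z) (mul_nonneg (hπ0 _) (hJ0 z)) (hα z) (hα1 z)
  have hflux : ∀ z, |(fderiv ℝ S z).det| • (α (S z) * π (S z)) = α z * π z := fun z => by
    rw [smul_eq_mul, ← hJ', hαπ, hαπ, hinv, mul_comm, min_mul_of_nonneg _ _ (hJ0 z), mul_assoc,
      hJS, mul_one, min_comm]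
  have haccept : Integrable (fun z => α z * π z) := by
    simp_rw [hαπ, mul_comm _ (J _), hJ']
    exact hπint.inf (hSi.integrable_abs_det_fderiv_smul_comp volume hSd hπint)
  have hreject : Integrable (fun z => (1 - α z) * π z) := by
    refine (hπint.sub haccept).congr (.of_forall fun z => ?_)
    simp only [Pi.sub_apply]
    ring
  rw [setIntegral_acceptReject_eq hSd.continuous.measurable haccept hreject A hB,
    setIntegral_acceptReject_eq hSd.continuous.measurable haccept hreject B hA,
    hSi.setIntegral_inter_preimage_comm volume hSd hflux hA hB, Set.inter_comm A B]
end
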